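/- Impossibility of Static Perfection. Let C be a positive integer and let q_t, q'_t, q_f, q'_f : Fin C → ℝ be probability vectors (the Primary model q and Secondary model q' evaluated on two samples t and f). Let k_t, k_f be the true classes of t and f. Suppose: (i) on t the Primary model is wrong with strict argmax i_t ≠ k_t (q_t(i_t) > q_t(c) for all c ≠ i_t) and the Secondary model is correct with strict argmax k_t (q'_t(k_t) > q'_t(c) for all c ≠ k_t); (ii) on f the Primary model is correct with strict argmax k_f (q_f(k_f) > q_f(c) for all c ≠ k_f) and the Secondary model is wrong with strict argmax j_f ≠ k_f (q'_f(j_f) > q'_f(c) for all c ≠ j_f); (iii) the exchange thresholds satisfy ET(t) := (q_t(i_t) - q_t(k_t)) / (q'_t(k_t) - q'_t(i_t)) ≥ (q_f(k_f) - q_f(j_f)) / (q'_f(j_f) - q'_f(k_f)) =: ET(f). Then there exists no static weight w ∈ (0,1) such that the fused model w·q + (1-w)·q' correctly classifies both samples, i.e. such that w·q_t(k_t) + (1-w)·q'_t(k_t) > w·q_t(c) + (1-w)·q'_t(c) for all c ≠ k_t and w·q_f(k_f) + (1-w)·q'_f(k_f) > w·q_f(c) + (1-w)·q'_f(c) for all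 c ≠ k_f. -/
import Mathlib


/-- Impossibility of Static Perfection (Theorem 1): given probability vectors
`q_t, q'_t, q_f, q'_f` (Primary and Secondary models on samples `t` and `f`) with
strict argmaxes as described, if the exchange thresholds satisfy `ET(t) ≥ ET(f)`,
then no static weight `w ∈ (0,1)` makes the fused model `w·q + (1-w)·q'` correctly
classify both samples. -/
theorem impossibility_of_static_perfection
    (C : ℕ) (hC : 0 < C)
    (qt q't qf q'f : Fin C → ℝ)
    (hqt0 : ∀ c, 0 ≤ qt c) (hqt1 : ∑ c, qt c = 1)
    (hq't0 : ∀ c, 0 ≤ q't c) (hq't1 : ∑ c, q't c = 1)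
    (hqf0 : ∀ c, 0 ≤ qf c) (hqf1 : ∑ c, qf c = 1)
    (hq'f0 : ∀ c, 0 ≤ q'f c) (hq'f1 : ∑ c, q'f c = 1)
    (kt kf it jf : Fin C)
    -- (i) on t the Primary model is wrong with strict argmax `it ≠ kt`,
    --     and the Secondary model is correct with strict argmax `kt`
    (hit : it ≠ kt)
    (hPMt : ∀ c, c ≠ it → qt it > qt c)
    (hSMt : ∀ c, c ≠ kt → q't kt > q't c)
    -- (ii) on f the Primary model is correct with strict argmax `kf`,
    --      and the Secondary model is wrong with strict argmax `jf ≠ kf`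
    (hPMf : ∀ c, c ≠ kf → qf kf > qf c)
    (hjf : jf ≠ kf)
    (hSMf : ∀ c, c ≠ jf → q'f jf > q'f c)
    -- (iii) exchange thresholds: ET(t) ≥ ET(f)
    (hET : (qt it - qt kt) / (q't kt - q't it) ≥
           (qf kf - qf jf) / (q'f jf - q'f kf)) :
    ¬ ∃ w ∈ Set.Ioo (0 : ℝ) 1,
        (∀ c, c ≠ kt → w * qt kt + (1 - w) * q't kt > w * qt c + (1 - w) * q't c) ∧
        (∀ c, c ≠ kf → w * qf kf + (1 - w) * q'f kf > w * qf c + (1 - w) * q'f c) := by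
  rintro ⟨w, ⟨hw0, hw1⟩, h1, h2⟩
  have hw1' : 0 < 1 - w := by linarith
  have ht := h1 it hit
  have hf := h2 jf hjf
  have hA : 0 < qt it - qt kt := by have := hPMt kt (Ne.symm hit); linarith
  have hB : 0 < q't kt - q't it := by have := hSMt it hit; linarith
  have hCc : 0 < qf kf - qf jf := by have := hPMf jf hjf; linarith
  have hD : 0 < q'f jf - q'f kf := by have := hSMf kf (Ne.symm hjf); linarith
  have h3 : w * (qt it - qt kt) < (1 - w) * (q't kt - q't it) := by nlinarith
  have h4 : (1 - w) * (q'f jf - q'f kf) < w * (qf kf - qf jf) := by nlinarith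
  have e1 : (qt it - qt kt) / (q't kt - q't it) < (1 - w) / w :=
    (div_lt_div_iff₀ hB hw0).2 (by nlinarith)
  have e2 : (1 - w) / w < (qf kf - qf jf) / (q'f jf - q'f kf) :=
    (div_lt_div_iff₀ hw0 hD).2 (by nlinarith)
  linarith
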